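/- arXiv:2502.09153 — 2 statements merged into one kernel-verified Lean document; each statement's English description precedes it below -/
import Mathlib

section
/- Let G be a connected finite simple graph and let G_S be the graph with the same vertex set as G in which two distinct vertices u and v are adjacent if and only if S(u,v) = {u,v}. Then G is isomorphic to G_S if and only if G is geodetic. -/
/-- The interval `I(u,v)`: vertices lying on some shortest `u,v`-path. -/
def SimpleGraph.interval {V : Type*} (G : SimpleGraph V) (u v : V) : Set V :=
  {x | ∃ p : G.Walk u v, p.IsPath ∧ p.length = G.dist u v ∧ x ∈ p.support}

/-- The stress interval `S(u,v)`: vertices lying on every shortest `u,v`-path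
(empty if `u` and `v` are in different components). -/
def SimpleGraph.stressInterval {V : Type*} (G : SimpleGraph V) (u v : V) : Set V :=
  {x | G.Reachable u v ∧
    ∀ p : G.Walk u v, p.IsPath → p.length = G.dist u v → x ∈ p.support}

/-- A set of vertices is stress convex if it contains the stress interval
between any two of its elements. -/
def SimpleGraph.IsStressConvex {V : Type*} (G : SimpleGraph V) (U : Set V) : Prop :=
  ∀ ⦃u⦄, u ∈ U → ∀ ⦃v⦄, v ∈ U → G.stressInterval u v ⊆ U

/-- A graph is geodetic if there is a unique shortest path between each pair of
vertices. -/
def SimpleGraph.Geodetic {V : Type*} (G : SimpleGraph V) : Prop :=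
  ∀ u v : V, ∃! p : G.Walk u v, p.IsPath ∧ p.length = G.dist u v

/-- The underlying graph `G_S` of the stress function: distinct vertices `u, v` are
adjacent iff `S(u,v) = {u,v}`. -/
def SimpleGraph.stressUnderlying {V : Type*} (G : SimpleGraph V) : SimpleGraph V :=
  SimpleGraph.fromRel (fun u v => G.stressInterval u v = {u, v})

/-! Adjacent vertices always have `S(u,v) = {u,v}`, so `G ≤ G_S`, and for a finite graph an
isomorphism `G ≃g G_S` forces `G = G_S`. If `G_S ≤ G`, two vertices at distance at least two
have a vertex `x ∉ {u,v}` in `S(u,v)`; every shortest `u,v`-path passes through `x`, so by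
induction on the distance the two halves of any two shortest paths agree. Conversely, in a
geodetic graph `S(u,v)` is the vertex set of the unique shortest path, which has only two
vertices exactly when `u ~ v`. -/

namespace SimpleGraph

variable {V : Type*} {G : SimpleGraph V} {u v : V}

theorem eq_of_le_of_iso [Finite V] {H : SimpleGraph V} (hle : G ≤ H) (e : G ≃g H) : G = H := by
  refine edgeSet_inj.mp (Set.eq_of_subset_of_ncard_le (edgeSet_mono hle) ?_ (Set.toFinite _))
  exact Nat.card_le_card_of_injective _ e.symm.mapEdgeSet.injective

theorem Walk.eq_toWalk_of_length_eq_one (p : G.Walk u v) (hp : p.length = 1) :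
    p = (adj_of_length_eq_one hp).toWalk := by
  cases p with
  | nil => simp at hp
  | cons h p' =>
    have hp' : p'.length = 0 := by simpa using hp
    obtain rfl := eq_of_length_eq_zero hp'
    obtain rfl := eq_nil_iff_nil.mpr (length_eq_zero_iff.mp hp')
    rfl

theorem pair_subset_stressInterval (h : G.Reachable u v) : {u, v} ⊆ G.stressInterval u v := by
  rintro x (rfl | rfl)
  · exact ⟨h, fun p _ _ => p.start_mem_support⟩
  · exact ⟨h, fun p _ _ => p.end_mem_support⟩

theorem stressInterval_eq_pair_of_adj (h : G.Adj u v) : G.stressInterval u v = {u, v} := by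
  refine Set.Subset.antisymm ?_ (pair_subset_stressInterval h.reachable)
  intro x hx
  simpa using hx.2 h.toWalk (by simp [h.ne]) (by simp [dist_eq_one_iff_adj.mpr h])

theorem le_stressUnderlying : G ≤ G.stressUnderlying := fun _ _ h =>
  (fromRel_adj _ _ _).mpr ⟨h.ne, Or.inl (stressInterval_eq_pair_of_adj h)⟩

theorem Geodetic.adj_of_stressInterval_eq_pair (hgeo : G.Geodetic) (hne : u ≠ v)
    (hS : G.stressInterval u v = {u, v}) : G.Adj u v := by
  classical
  obtain ⟨p, ⟨hp, hpl⟩, huniq⟩ := hgeo u v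
  have hsupp : p.support.toFinset ⊆ {u, v} := by
    intro x hx
    have hxS : x ∈ G.stressInterval u v :=
      ⟨p.reachable, fun q hq hql => huniq q ⟨hq, hql⟩ ▸ List.mem_toFinset.mp hx⟩
    simpa [hS] using hxS
  have hcard : p.length + 1 ≤ 2 := by
    rw [← p.length_support, ← List.toFinset_card_of_nodup hp.support_nodup]
    exact (Finset.card_le_card hsupp).trans Finset.card_le_two
  have hpos : p.length ≠ 0 := fun h => hne (p.eq_of_length_eq_zero h)
  exact p.adj_of_length_eq_one (by omega)

theorem Geodetic.stressUnderlying_eq (hgeo : G.Geodetic) : G.stressUnderlying = G := by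
  refine le_antisymm (fun u v h => ?_) le_stressUnderlying
  obtain ⟨hne, hS | hS⟩ := (fromRel_adj _ _ _).mp h
  · exact hgeo.adj_of_stressInterval_eq_pair hne hS
  · exact (hgeo.adj_of_stressInterval_eq_pair hne.symm hS).symm

theorem exists_mem_stressInterval_of_not_adj (hS : G.stressUnderlying ≤ G)
    (h : G.Reachable u v) (hne : u ≠ v) (hnadj : ¬G.Adj u v) :
    ∃ x ∈ G.stressInterval u v, x ≠ u ∧ x ≠ v := by
  by_contra! hx
  refine hnadj (hS ((fromRel_adj _ _ _).mpr ⟨hne, Or.inl ?_⟩))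
  refine Set.Subset.antisymm (fun x hxS => ?_) (pair_subset_stressInterval h)
  by_cases hxu : x = u
  · exact Or.inl hxu
  · exact Or.inr (hx x hxS hxu)

theorem Walk.eq_of_length_eq_dist_of_stressUnderlying_le (hS : G.stressUnderlying ≤ G)
    {u v : V} (p q : G.Walk u v) (hp : p.length = G.dist u v) (hq : q.length = G.dist u v) :
    p = q := by
  classical
  induction hn : G.dist u v using Nat.strong_induction_on generalizing u v with
  | _ n ih =>
  by_cases huv : u = v
  · subst huv
    rw [dist_self] at hp hq
    rw [eq_nil_iff_nil.mpr (length_eq_zero_iff.mp hp),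
      eq_nil_iff_nil.mpr (length_eq_zero_iff.mp hq)]
  by_cases hadj : G.Adj u v
  · rw [dist_eq_one_iff_adj.mpr hadj] at hp hq
    rw [p.eq_toWalk_of_length_eq_one hp, q.eq_toWalk_of_length_eq_one hq]
  obtain ⟨x, hxS, hxu, hxv⟩ := exists_mem_stressInterval_of_not_adj hS p.reachable huv hadj
  have hxp := hxS.2 p (p.isPath_of_length_eq_dist hp) hp
  have hxq := hxS.2 q (q.isPath_of_length_eq_dist hq) hq
  have hpt := length_eq_dist_of_subwalk hp (p.isSubwalk_takeUntil hxp)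
  have hpd := length_eq_dist_of_subwalk hp (p.isSubwalk_dropUntil hxp)
  have hqt := length_eq_dist_of_subwalk hq (q.isSubwalk_takeUntil hxq)
  have hqd := length_eq_dist_of_subwalk hq (q.isSubwalk_dropUntil hxq)
  have hsum : G.dist u x + G.dist x v = n := by
    rw [← hn, ← hp, ← p.take_spec hxp, length_append, hpt, hpd]
  have hux_dist : G.dist u x ≠ 0 := fun h => hxu (eq_of_length_eq_zero (hpt.trans h)).symm
  have hxv_dist : G.dist x v ≠ 0 := fun h => hxv (eq_of_length_eq_zero (hpd.trans h))
  rw [← p.take_spec hxp, ← q.take_spec hxq,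
    ih _ (by omega) _ _ hpt hqt rfl, ih _ (by omega) _ _ hpd hqd rfl]

theorem geodetic_of_stressUnderlying_le (hG : G.Connected) (hS : G.stressUnderlying ≤ G) :
    G.Geodetic := fun u v => by
  obtain ⟨p, hp, hpl⟩ := hG.exists_path_of_dist u v
  exact ⟨p, ⟨hp, hpl⟩, fun q ⟨_, hql⟩ =>
    Walk.eq_of_length_eq_dist_of_stressUnderlying_le hS q p hql hpl⟩

end SimpleGraph

/-- a connected finite graph `G` is isomorphic to the underlying graph
`G_S` of its stress function iff `G` is geodetic. -/
theorem iso_stressUnderlying_iff_geodetic {V : Type*} [Fintype V]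
    (G : SimpleGraph V) (hG : G.Connected) :
    Nonempty (G ≃g G.stressUnderlying) ↔ G.Geodetic := by
  constructor
  · rintro ⟨e⟩
    have heq : G = G.stressUnderlying :=
      SimpleGraph.eq_of_le_of_iso SimpleGraph.le_stressUnderlying e
    exact SimpleGraph.geodetic_of_stressUnderlying_le hG heq.ge
  · intro hgeo
    rw [hgeo.stressUnderlying_eq]
    exact ⟨.refl⟩
end

section
/- Let G and H be nonempty finite simple graphs. Then the Cartesian product G □ H is s-trivial if and only if both G and H are s-trivial. -/
/-- `G` is s-trivial if every stress interval is contained in its endpoints. -/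
def SimpleGraph.STrivial {V : Type*} (G : SimpleGraph V) : Prop :=
  ∀ u v : V, G.stressInterval u v ⊆ {u, v}

/-!
A walk in `G □ H` has length the sum of the lengths of its projections to `G` and `H`, so
distances add up and a geodesic of `G □ H` between two vertices of a layer `G × {w}` is the lift
of a geodesic of `G`. Hence the stress interval of `(u, w), (v, w)` in `G □ H` is the stress
interval of `u, v` in `G`, placed in the layer; this gives both directions for pairs in a common
layer. For `u ≠ v` and `w ≠ z`, the stress interval of `(u, w), (v, z)` is trivial in any case,
because the two "L-shaped" geodesics through `(v, w)` and through `(u, z)` meet only at their ends.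
-/

namespace SimpleGraph

variable {V W : Type*} {G : SimpleGraph V} {H : SimpleGraph W}

lemma mem_stressInterval_iff {u v x : V} :
    x ∈ G.stressInterval u v ↔
      G.Reachable u v ∧ ∀ p : G.Walk u v, p.length = G.dist u v → x ∈ p.support :=
  and_congr_right fun _ =>
    ⟨fun h p hp => h p (p.isPath_of_length_eq_dist hp) hp, fun h p _ => h p⟩

lemma dist_boxProd {u v : V} {w z : W} (hG : G.Reachable u v) (hH : H.Reachable w z) :
    (G □ H).dist (u, w) (v, z) = G.dist u v + H.dist w z := by
  rw [dist, dist, dist, edist_boxProd,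
    ENat.toNat_add (edist_ne_top_iff_reachable.2 hG) (edist_ne_top_iff_reachable.2 hH)]

namespace Walk

@[simp]
lemma length_boxProdLeft {u v : V} (p : G.Walk u v) (w : W) :
    (p.boxProdLeft H w).length = p.length := length_map _ _

@[simp]
lemma support_boxProdLeft {u v : V} (p : G.Walk u v) (w : W) :
    (p.boxProdLeft H w).support = p.support.map (·, w) := support_map _ _

@[simp]
lemma length_boxProdRight {w z : W} (q : H.Walk w z) (u : V) :
    (q.boxProdRight G u).length = q.length := length_map _ _

@[simp]
lemma support_boxProdRight {w z : W} (q : H.Walk w z) (u : V) :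
    (q.boxProdRight G u).support = q.support.map (u, ·) := support_map _ _

lemma mem_support_ofBoxProdLeft_iff [DecidableEq W] [DecidableRel G.Adj] {x y : V × W}
    (p : (G □ H).Walk x y) {a : V} :
    a ∈ p.ofBoxProdLeft.support ↔ ∃ b, (a, b) ∈ p.support := by
  induction p with
  | nil => simp [ofBoxProdLeft, Prod.ext_iff]
  | @cons x c y h p ih =>
    simp only [support_cons, List.mem_cons, ofBoxProdLeft, Or.by_cases]
    split_ifs with hG
    · simp [ih, Prod.ext_iff, exists_or]
    · obtain ⟨x1, x2⟩ := x
      obtain ⟨c1, c2⟩ := c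
      obtain rfl : x1 = c1 := by simp_all [boxProd_adj]
      rw [ih]
      refine ⟨fun ⟨b, hb⟩ => ⟨b, .inr hb⟩, ?_⟩
      rintro ⟨b, ⟨rfl, -⟩ | hb⟩
      exacts [⟨c2, p.start_mem_support⟩, ⟨b, hb⟩]

lemma mem_support_ofBoxProdRight_iff [DecidableEq V] [DecidableRel H.Adj] {x y : V × W}
    (p : (G □ H).Walk x y) {b : W} :
    b ∈ p.ofBoxProdRight.support ↔ ∃ a, (a, b) ∈ p.support := by
  induction p with
  | nil => simp [ofBoxProdRight, Prod.ext_iff]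
  | @cons x c y h p ih =>
    simp only [support_cons, List.mem_cons, ofBoxProdRight, Or.by_cases]
    split_ifs with hH
    · simp [ih, Prod.ext_iff, exists_or]
    · obtain ⟨x1, x2⟩ := x
      obtain ⟨c1, c2⟩ := c
      obtain rfl : x2 = c2 := by simp_all [boxProd_adj]
      rw [ih]
      refine ⟨fun ⟨a, ha⟩ => ⟨a, .inr ha⟩, ?_⟩
      rintro ⟨a, ⟨-, rfl⟩ | ha⟩
      exacts [⟨c1, p.start_mem_support⟩, ⟨a, ha⟩]

end Walk

lemma mem_stressInterval_boxProd_left {u v x : V} {w y : W} :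
    (x, y) ∈ (G □ H).stressInterval (u, w) (v, w) ↔ y = w ∧ x ∈ G.stressInterval u v := by
  classical
  simp only [mem_stressInterval_iff, reachable_boxProd, Reachable.refl, and_true]
  constructor
  · rintro ⟨hG, hS⟩
    have hdist : (G □ H).dist (u, w) (v, w) = G.dist u v := by
      simp [dist_boxProd hG (Reachable.refl w)]
    have hlift (P : G.Walk u v) (hP : P.length = G.dist u v) : x ∈ P.support ∧ w = y := by
      simpa using hS (P.boxProdLeft H w) (by simp [hdist, hP])
    obtain ⟨P, hP⟩ := hG.exists_walk_length_eq_dist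
    exact ⟨(hlift P hP).2.symm, hG, fun P hP => (hlift P hP).1⟩
  · rintro ⟨rfl, hG, hS⟩
    refine ⟨hG, fun p hp => ?_⟩
    have hlen : G.dist u v = p.ofBoxProdLeft.length + p.ofBoxProdRight.length := by
      rw [← p.length_boxProd, hp, dist_boxProd hG (Reachable.refl y), H.dist_self, add_zero]
    have hle : G.dist u v ≤ p.ofBoxProdLeft.length := G.dist_le _
    obtain ⟨b, hb⟩ := p.mem_support_ofBoxProdLeft_iff.1 (hS _ (by omega))
    have hsupp : p.ofBoxProdRight.support = [y] :=
      Walk.nil_iff_support_eq.1 (Walk.length_eq_zero_iff.1 (by omega))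
    obtain rfl : b = y := by simpa [hsupp] using p.mem_support_ofBoxProdRight_iff.2 ⟨x, hb⟩
    exact hb

lemma mem_stressInterval_boxProd_right {u x : V} {w z y : W} :
    (x, y) ∈ (G □ H).stressInterval (u, w) (u, z) ↔ x = u ∧ y ∈ H.stressInterval w z := by
  classical
  simp only [mem_stressInterval_iff, reachable_boxProd, Reachable.refl, true_and]
  constructor
  · rintro ⟨hH, hS⟩
    have hdist : (G □ H).dist (u, w) (u, z) = H.dist w z := by
      simp [dist_boxProd (Reachable.refl u) hH]
    have hlift (Q : H.Walk w z) (hQ : Q.length = H.dist w z) : y ∈ Q.support ∧ u = x := by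
      simpa using hS (Q.boxProdRight G u) (by simp [hdist, hQ])
    obtain ⟨Q, hQ⟩ := hH.exists_walk_length_eq_dist
    exact ⟨(hlift Q hQ).2.symm, hH, fun Q hQ => (hlift Q hQ).1⟩
  · rintro ⟨rfl, hH, hS⟩
    refine ⟨hH, fun p hp => ?_⟩
    have hlen : H.dist w z = p.ofBoxProdLeft.length + p.ofBoxProdRight.length := by
      rw [← p.length_boxProd, hp, dist_boxProd (Reachable.refl x) hH, G.dist_self, zero_add]
    have hle : H.dist w z ≤ p.ofBoxProdRight.length := H.dist_le _
    obtain ⟨a, ha⟩ := p.mem_support_ofBoxProdRight_iff.1 (hS _ (by omega))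
    have hsupp : p.ofBoxProdLeft.support = [x] :=
      Walk.nil_iff_support_eq.1 (Walk.length_eq_zero_iff.1 (by omega))
    obtain rfl : a = x := by simpa [hsupp] using p.mem_support_ofBoxProdLeft_iff.2 ⟨y, ha⟩
    exact ha

/- `(x, y)` lies on the two geodesics `P × {w}` then `{v} × Q` and `{u} × Q` then `P × {z}`,
which meet only in their endpoints. -/
lemma stressInterval_boxProd_subset_of_ne {u v : V} {w z : W} (huv : u ≠ v) (hwz : w ≠ z) :
    (G □ H).stressInterval (u, w) (v, z) ⊆ {(u, w), (v, z)} := by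
  rintro ⟨x, y⟩ hxy
  simp only [mem_stressInterval_iff, reachable_boxProd] at hxy
  obtain ⟨⟨hG, hH⟩, hS⟩ := hxy
  obtain ⟨P, hP⟩ := hG.exists_walk_length_eq_dist
  obtain ⟨Q, hQ⟩ := hH.exists_walk_length_eq_dist
  have hdist := dist_boxProd hG hH
  have h₁ := hS ((P.boxProdLeft H w).append (Q.boxProdRight G v)) (by simp [hdist, hP, hQ])
  have h₂ := hS ((Q.boxProdRight G u).append (P.boxProdLeft H z)) (by simp [hdist, hP, hQ]; omega)
  simp only [Walk.mem_support_append_iff, Walk.support_boxProdLeft, Walk.support_boxProdRight,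
    List.mem_map, Prod.mk.injEq] at h₁ h₂
  simp only [Set.mem_insert_iff, Set.mem_singleton_iff, Prod.mk.injEq]
  rcases h₁ with ⟨-, -, -, rfl⟩ | ⟨-, -, rfl, -⟩ <;> rcases h₂ with ⟨-, -, rfl, -⟩ | ⟨-, -, -, rfl⟩
  all_goals tauto

theorem STrivial.of_boxProd_left [Nonempty W] (h : (G □ H).STrivial) : G.STrivial := by
  intro u v x hx
  obtain ⟨w⟩ := ‹Nonempty W›
  simpa using h _ _ ((mem_stressInterval_boxProd_left (w := w)).2 ⟨rfl, hx⟩)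

theorem STrivial.of_boxProd_right [Nonempty V] (h : (G □ H).STrivial) : H.STrivial := by
  intro w z y hy
  obtain ⟨u⟩ := ‹Nonempty V›
  simpa using h _ _ ((mem_stressInterval_boxProd_right (u := u)).2 ⟨rfl, hy⟩)

theorem STrivial.boxProd (hG : G.STrivial) (hH : H.STrivial) : (G □ H).STrivial := by
  rintro ⟨u, w⟩ ⟨v, z⟩ ⟨x, y⟩ hxy
  by_cases hwz : w = z
  · subst hwz
    obtain ⟨rfl, hx⟩ := mem_stressInterval_boxProd_left.1 hxy
    simpa using hG u v hx
  by_cases huv : u = v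
  · subst huv
    obtain ⟨rfl, hy⟩ := mem_stressInterval_boxProd_right.1 hxy
    simpa using hH w z hy
  exact stressInterval_boxProd_subset_of_ne huv hwz hxy

end SimpleGraph

theorem boxProd_sTrivial_iff_general {V W : Type*}
    [Nonempty V] [Nonempty W] (G : SimpleGraph V) (H : SimpleGraph W) :
    (G.boxProd H).STrivial ↔ (G.STrivial ∧ H.STrivial) :=
  ⟨fun h => ⟨h.of_boxProd_left, h.of_boxProd_right⟩, fun ⟨hG, hH⟩ => hG.boxProd hH⟩

/-- for nonempty finite graphs `G` and `H`, the Cartesian (box) product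
`G □ H` is s-trivial iff both `G` and `H` are s-trivial. -/
theorem boxProd_sTrivial_iff {V W : Type*} [Fintype V] [Fintype W]
    [Nonempty V] [Nonempty W] (G : SimpleGraph V) (H : SimpleGraph W) :
    (G.boxProd H).STrivial ↔ (G.STrivial ∧ H.STrivial) :=
  boxProd_sTrivial_iff_general G H
end
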